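/- arXiv:2302.11456 — 2 statements merged into one kernel-verified Lean document; each statement's English description precedes it below -/
import Mathlib

section
/- Let k be an algebraically closed field of characteristic not 2, and let σ be a k-algebra involution of the power series ring k[[t]]. Then the differential of σ acts on the cotangent space as multiplication by a scalar ξ ∈ k satisfying ξ² = 1, and if φ is the k-algebra endomorphism of k[[t]] determined by t ↦ (t + ξ·σ(t))/2, then φ is an automorphism and φ⁻¹ ∘ σ ∘ φ is the involution determined by t ↦ ξ·t. -/
/-!
Put `ξ = σ'(0)`, the coefficient of `t` in `σ(t)`. Comparing linear terms in `σ(σ(t)) = t`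
gives `ξ² = 1`, so `h = (t + ξ σ(t)) / 2` satisfies `σ(h) = ξ h` and `h = t + O(t²)`.
The latter makes `t ↦ h` an automorphism `φ` (with inverse given by the compositional inverse
of `h`), and then `σ ∘ φ` and `φ ∘ rescale ξ` agree on `t`. A `k`-algebra endomorphism of
`k⟦t⟧` sending `t` into the maximal ideal is determined by the image of `t`: it is fixed on
polynomials, and every series agrees with a polynomial modulo any power of `t`.
-/

open PowerSeries

namespace PowerSeries

variable {R : Type*} [CommRing R]

theorem algHom_ext_of_constantCoeff_X_eq_zero {F G : R⟦X⟧ →ₐ[R] R⟦X⟧}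
    (hF : constantCoeff (F X) = 0) (hFG : F X = G X) : F = G := by
  have hpoly : ∀ p : Polynomial R, F p = G p := fun p => by
    have := Polynomial.algHom_ext (f := F.comp (Polynomial.coeToPowerSeries.algHom R))
      (g := G.comp (Polynomial.coeToPowerSeries.algHom R)) (by simpa using hFG)
    simpa using congr($this p)
  refine AlgHom.ext fun f => ext fun n => ?_
  have hdvd : X ^ (n + 1) ∣ F f - G f := by
    rw [eq_X_pow_mul_shift_add_trunc (n + 1) f]
    simp only [map_add, map_mul, map_pow, hpoly, add_sub_add_right_eq_sub, ← hFG, ← mul_sub]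
    exact dvd_mul_of_dvd_left (pow_dvd_pow_of_dvd (X_dvd_iff.mpr hF) _) _
  simpa [sub_eq_zero] using X_pow_dvd_iff.mp hdvd n (Nat.lt_succ_self n)

theorem coeff_one_algHom_apply {A : Type*} [FunLike A R⟦X⟧ R⟦X⟧] [AlgHomClass A R R⟦X⟧ R⟦X⟧]
    (F : A) (hF : constantCoeff (F X) = 0) (f : R⟦X⟧) :
    coeff 1 (F f) = coeff 1 f * coeff 1 (F X) := by
  obtain ⟨s, hs⟩ : X ^ 2 ∣ f - C (coeff 0 f) - C (coeff 1 f) * X := by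
    refine X_pow_dvd_iff.mpr fun m hm => ?_
    interval_cases m <;> simp [coeff_C]
  have hC : ∀ r, F (C r) = C r := AlgHomClass.commutes F
  obtain ⟨u, hu⟩ := X_dvd_iff.mpr hF
  rw [sub_sub, sub_eq_iff_eq_add] at hs
  rw [hs]
  simp [hC, hu, mul_pow, mul_assoc, coeff_X_pow_mul', coeff_C]

theorem substAlgHom_comp_substAlgHom_of_subst_eq_X {P Q : R⟦X⟧} (hP : HasSubst P)
    (hQ : HasSubst Q) (hPQ : subst P Q = X) :
    (substAlgHom hP).comp (substAlgHom hQ) = AlgHom.id R R⟦X⟧ :=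
  have hX : (substAlgHom hP).comp (substAlgHom hQ) X = X := by
    rw [AlgHom.comp_apply, substAlgHom_X, coe_substAlgHom, hPQ]
  algHom_ext_of_constantCoeff_X_eq_zero (by rw [hX, constantCoeff_X]) hX

noncomputable def substAlgEquiv (P : R⟦X⟧) (hP : constantCoeff P = 0)
    (hP' : IsUnit (coeff 1 P)) : R⟦X⟧ ≃ₐ[R] R⟦X⟧ :=
  AlgEquiv.ofAlgHom (substAlgHom (HasSubst.of_constantCoeff_zero' hP))
    (substAlgHom (HasSubst.substInvOfIsUnit P hP'))
    (substAlgHom_comp_substAlgHom_of_subst_eq_X _ _ (subst_substInvOfIsUnit_left P hP hP'))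
    (substAlgHom_comp_substAlgHom_of_subst_eq_X _ _ (subst_substInvOfIsUnit_right P hP hP'))

theorem substAlgEquiv_apply_X (P : R⟦X⟧) (hP : constantCoeff P = 0)
    (hP' : IsUnit (coeff 1 P)) : substAlgEquiv P hP hP' X = P :=
  substAlgHom_X (HasSubst.of_constantCoeff_zero' hP)

theorem constantCoeff_algEquiv_apply_X {k : Type*} [Field k] (σ : k⟦X⟧ ≃ₐ[k] k⟦X⟧) :
    constantCoeff (σ X) = 0 := by
  by_contra h
  have := (isUnit_map_iff σ X).mp (isUnit_iff_constantCoeff.mpr (Ne.isUnit h))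
  simpa using isUnit_iff_constantCoeff.mp this

end PowerSeries

theorem stmt0_general (k : Type*) [Field k] (hchar : (2 : k) ≠ 0)
    (σ : PowerSeries k ≃ₐ[k] PowerSeries k) (hinv : ∀ f, σ (σ f) = f) :
    ∃ ξ : k, ξ ^ 2 = 1 ∧ PowerSeries.coeff 1 (σ PowerSeries.X) = ξ ∧
      ∃ φ : PowerSeries k ≃ₐ[k] PowerSeries k,
        φ PowerSeries.X
          = PowerSeries.C (2⁻¹ : k) *
              (PowerSeries.X + PowerSeries.C ξ * σ PowerSeries.X) ∧
        ∀ f : PowerSeries k, φ.symm (σ (φ f)) = PowerSeries.rescale ξ f := by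
  obtain ⟨ξ, hξdef⟩ : ∃ ξ, coeff 1 (σ X) = ξ := ⟨_, rfl⟩
  have hσX := constantCoeff_algEquiv_apply_X σ
  have hσC : ∀ a, σ (C a) = C a := σ.commutes
  have hξ : ξ * ξ = 1 := by
    have := coeff_one_algHom_apply σ hσX (σ X)
    rwa [hinv, coeff_one_X, hξdef, eq_comm] at this
  set h := C 2⁻¹ * (X + C ξ * σ X)
  have hh0 : constantCoeff h = 0 := by simp [h, hσX]
  have hh1 : coeff 1 h = 1 := by
    rw [coeff_C_mul, map_add, coeff_one_X, coeff_C_mul, hξdef, hξ, one_add_one_eq_two,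
      inv_mul_cancel₀ hchar]
  have hσh : σ h = C ξ * h := by
    simp only [h, map_mul, map_add, hσC, hinv]
    have hCξ : C ξ * C ξ = 1 := by rw [← map_mul, hξ, map_one]
    linear_combination (-(C (2⁻¹ : k) * σ X)) * hCξ
  let φ := substAlgEquiv h hh0 (hh1 ▸ isUnit_one)
  have hφX : φ X = h := substAlgEquiv_apply_X _ _ _
  have hconj : σ.toAlgHom.comp φ.toAlgHom = φ.toAlgHom.comp (rescaleAlgHom ξ) := by
    refine algHom_ext_of_constantCoeff_X_eq_zero (by simp [hφX, hσh, hh0]) ?_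
    have hrescaleX : rescaleAlgHom ξ X = C ξ * X :=
      congr($(coe_rescaleAlgHom ξ) X).trans (rescale_X ξ)
    have hφC : ∀ a, φ (C a) = C a := φ.commutes
    simp [hφX, hσh, hrescaleX, hφC]
  refine ⟨ξ, by rw [sq, hξ], hξdef, φ, hφX, fun f => ?_⟩
  rw [AlgEquiv.symm_apply_eq, ← coe_rescaleAlgHom]
  exact congr($hconj f)

theorem stmt0 (k : Type*) [Field k] [IsAlgClosed k] (hchar : (2 : k) ≠ 0)
    (σ : PowerSeries k ≃ₐ[k] PowerSeries k) (hinv : ∀ f, σ (σ f) = f) :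
    ∃ ξ : k, ξ ^ 2 = 1 ∧ PowerSeries.coeff 1 (σ PowerSeries.X) = ξ ∧
      ∃ φ : PowerSeries k ≃ₐ[k] PowerSeries k,
        φ PowerSeries.X
          = PowerSeries.C (2⁻¹ : k) *
              (PowerSeries.X + PowerSeries.C ξ * σ PowerSeries.X) ∧
        ∀ f : PowerSeries k, φ.symm (σ (φ f)) = PowerSeries.rescale ξ f :=
  stmt0_general k hchar σ hinv
end

section
/- Let k be a field of characteristic not 2, r even, A_r = k[[x,y]]/(y²−x^{r+1}), and σ the involution x ↦ x, y ↦ −y. Then the invariant subalgebra A_r^σ is isomorphic to k[[x]] (in particular it is regular), the inclusion A_r^σ ⊆ A_r is faithfully flat, and the fixed-point subscheme of σ (defined by the ideal generated by a − σ(a) for a ∈ A_r, i.e. by (y)) is a Cartier divisor of length r+1. -/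
/-!
**Statement 4.** Let `k` be a field of characteristic not 2, `r` even,
`A_r = k[[x,y]]/(y²−x^{r+1})`, and `σ` the involution `x ↦ x`, `y ↦ −y`. Then the invariant
subalgebra `A_r^σ` is isomorphic to `k[[x]]` (in particular it is regular), the inclusion
`A_r^σ ⊆ A_r` is faithfully flat, and the fixed-point subscheme of `σ` (defined by the ideal
generated by `a − σ(a)` for `a ∈ A_r`, i.e. by `(y)`) is a Cartier divisor of length `r+1`.
-/

noncomputable section

open MvPowerSeries

/-- The formal power series ring `k[[x,y]]` in two variables. -/
abbrev PS2 (k : Type*) [Field k] : Type _ := MvPowerSeries (Fin 2) k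

/-- The complete local ring `A_r = k[[x,y]]/(y² − x^{r+1})` of an `A_r`-singularity. -/
abbrev ArRing (k : Type*) [Field k] (r : ℕ) : Type _ :=
  PS2 k ⧸ Ideal.span {(X (1 : Fin 2) : PS2 k) ^ 2 - (X (0 : Fin 2) : PS2 k) ^ (r + 1)}

/-- The class of `x` in `A_r`. -/
def ArRing.x (k : Type*) [Field k] (r : ℕ) : ArRing k r :=
  Ideal.Quotient.mk _ (X (0 : Fin 2))

/-- The class of `y` in `A_r`. -/
def ArRing.y (k : Type*) [Field k] (r : ℕ) : ArRing k r :=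
  Ideal.Quotient.mk _ (X (1 : Fin 2))

/-!
Weierstrass division by the distinguished polynomial `Y² - x^{r+1}` over `k⟦x⟧` identifies
`A_r` with `k⟦x⟧[Y]/(Y² - x^{r+1})`, so every element is uniquely `a + b y` with
`a, b ∈ k⟦x⟧`. The automorphism `σ` agrees with the identity on `k[x]`, and every `a ∈ k⟦x⟧`
is a polynomial modulo `xⁿ` for each `n`; since `⋂ xⁿ A_r = 0`, `σ` fixes `k⟦x⟧`, hence
`σ (a + b y) = a - b y`. As `2` is invertible, the invariants are `k⟦x⟧`, over which `A_r` is
free with basis `1, y`, and the elements `a - σ a = 2 b y` generate `(y)`. Finally `y² = x^{r+1}`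
makes `y` a nonzerodivisor, and `A_r/(y) ≅ k⟦x⟧/(x^{r+1})` has dimension `r + 1`.
-/

open scoped Polynomial

namespace AdjoinRoot

variable {R : Type*} [CommRing R] {f : R[X]}

theorem exists_of_add_of_mul_root (hf : f.Monic) (hdeg : f.natDegree = 2) (z : AdjoinRoot f) :
    ∃ a b : R, of f a + of f b * root f = z := by
  obtain ⟨p, rfl⟩ := mk_surjective z
  have hlt : (p %ₘ f).natDegree ≤ 1 := by
    have := Polynomial.natDegree_modByMonic_lt p hf (by rintro rfl; simp at hdeg)
    omega
  refine ⟨(p %ₘ f).coeff 0, (p %ₘ f).coeff 1, ?_⟩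
  rw [← mk_leftInverse hf (mk f p), modByMonicHom_mk,
    Polynomial.eq_X_add_C_of_natDegree_le_one hlt]
  simp [add_comm]

theorem eq_zero_of_of_add_of_mul_root_eq_zero (hf : f.Monic) (hdeg : f.natDegree = 2) {a b : R}
    (h : of f a + of f b * root f = 0) : a = 0 ∧ b = 0 := by
  have hdvd : f ∣ Polynomial.C b * Polynomial.X + Polynomial.C a := by
    rw [← mk_eq_zero, ← h]
    simp [add_comm]
  by_contra hne
  refine hf.not_dvd_of_natDegree_lt (fun h0 => hne ?_) ?_ hdvd
  · exact ⟨by simpa using congrArg (Polynomial.coeff · 0) h0,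
      by simpa using congrArg (Polynomial.coeff · 1) h0⟩
  · have := Polynomial.natDegree_linear_le (a := b) (b := a)
    omega

end AdjoinRoot

namespace PowerSeries

theorem X_pow_dvd_sub_trunc {R : Type*} [Ring R] (a : R⟦X⟧) (n : ℕ) :
    X ^ n ∣ a - (trunc n a : R⟦X⟧) := by
  rw [X_pow_dvd_iff]
  intro m hm
  rw [map_sub, Polynomial.coeff_coe, coeff_trunc, if_pos hm, sub_self]

theorem eq_zero_of_forall_X_pow_dvd {R : Type*} [Semiring R] {a : R⟦X⟧} (h : ∀ n, X ^ n ∣ a) :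
    a = 0 := by
  ext m
  simpa using X_pow_dvd_iff.1 (h (m + 1)) m (Nat.lt_succ_self m)

theorem algHom_ext_of_forall_mem_span_pow {R A : Type*} [CommRing R] [CommRing A] [Algebra R A]
    {φ ψ : R⟦X⟧ →ₐ[R] A} (hX : φ X = ψ X)
    (hsep : ∀ w : A, (∀ n, w ∈ Ideal.span {φ X ^ n}) → w = 0) : φ = ψ := by
  have hpoly : φ.comp (Polynomial.coeToPowerSeries.algHom R) =
      ψ.comp (Polynomial.coeToPowerSeries.algHom R) :=
    Polynomial.algHom_ext (by simpa using hX)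
  ext a
  rw [← sub_eq_zero]
  refine hsep _ fun n => ?_
  obtain ⟨c, hc⟩ := X_pow_dvd_sub_trunc a n
  have htrunc := DFunLike.congr_fun hpoly (trunc n a)
  simp only [AlgHom.comp_apply, Polynomial.coeToPowerSeries.algHom_apply, Algebra.algebraMap_self,
    map_id, id_eq] at htrunc
  rw [sub_eq_iff_eq_add'] at hc
  rw [hc, map_add, map_add, htrunc, map_mul, map_mul, map_pow, map_pow, ← hX]
  exact Ideal.mem_span_singleton'.2 ⟨φ c - ψ c, by ring⟩

theorem finrank_quotient_span_X_pow {K : Type*} [Field K] (n : ℕ) :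
    Module.finrank K (K⟦X⟧ ⧸ Ideal.span {(X ^ n : K⟦X⟧)}) = n := by
  have H : (Polynomial.X ^ n : K[X]).IsDistinguishedAt ⊥ :=
    ⟨⟨fun hm => by
      rw [Polynomial.natDegree_X_pow] at hm
      simp [Polynomial.coeff_X_pow, hm.ne]⟩, Polynomial.monic_X_pow n⟩
  have hcoe : ((Polynomial.X ^ n : K[X]) : K⟦X⟧) = X ^ n := by simp
  rw [← hcoe, ← H.algEquivQuotient.toLinearEquiv.finrank_eq, finrank_quotient_span_eq_natDegree,
    Polynomial.natDegree_X_pow]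

end PowerSeries

section Presentation

variable {k : Type*} [Field k]

variable (k) in
def arPolynomial (r : ℕ) : (PowerSeries k)[X] :=
  Polynomial.X ^ 2 - Polynomial.C (PowerSeries.X ^ (r + 1))

lemma arPolynomial_natDegree (r : ℕ) : (arPolynomial k r).natDegree = 2 := by
  unfold arPolynomial
  compute_degree!

lemma arPolynomial_monic (r : ℕ) : (arPolynomial k r).Monic := by
  unfold arPolynomial
  monicity!

lemma arPolynomial_isDistinguishedAt (r : ℕ) :
    (arPolynomial k r).IsDistinguishedAt (Ideal.span {PowerSeries.X}) where
  monic := arPolynomial_monic r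
  mem {n} hn := by
    rw [arPolynomial_natDegree] at hn
    interval_cases n <;>
      simp only [arPolynomial, Polynomial.coeff_sub, Polynomial.coeff_X_pow, Polynomial.coeff_C] <;>
      simp [Ideal.mem_span_singleton]

/-- Makes `y = X 1` the outer variable of `k⟦x⟧⟦y⟧`. -/
def finTwoEquivOptionUnit : Fin 2 ≃ Option Unit :=
  finSuccEquivLast.trans (Equiv.optionCongr (Equiv.equivPUnit (Fin 1)))

variable (k) in
def ps2EquivPowerSeries : PS2 k ≃ₐ[k] PowerSeries (PowerSeries k) :=
  (renameEquiv k finTwoEquivOptionUnit).trans (optionEquivLeft Unit k)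

lemma ps2EquivPowerSeries_X_zero :
    ps2EquivPowerSeries k (X 0 : PS2 k) = PowerSeries.C PowerSeries.X := by
  change optionEquivLeft Unit k (rename finTwoEquivOptionUnit (X 0)) = _
  rw [rename_X]
  exact optionEquivLeft_X_some (R := k) ()

lemma ps2EquivPowerSeries_X_one : ps2EquivPowerSeries k (X 1 : PS2 k) = PowerSeries.X := by
  change optionEquivLeft Unit k (rename finTwoEquivOptionUnit (X 1)) = _
  rw [rename_X]
  exact optionEquivLeft_X_none (R := k)

lemma span_coe_arPolynomial_eq_map (r : ℕ) :
    Ideal.span {(arPolynomial k r : PowerSeries (PowerSeries k))} =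
      (Ideal.span {(X 1 : PS2 k) ^ 2 - X 0 ^ (r + 1)}).map (ps2EquivPowerSeries k) := by
  have hrel : ps2EquivPowerSeries k ((X 1 : PS2 k) ^ 2 - X 0 ^ (r + 1)) =
      (arPolynomial k r : PowerSeries (PowerSeries k)) := by
    simp [arPolynomial, ps2EquivPowerSeries_X_zero, ps2EquivPowerSeries_X_one]
  rw [Ideal.map_span, Set.image_singleton]
  exact congrArg _ (congrArg _ hrel.symm)

/- Over `A = k⟦x⟧` these instances make `A⟦Y⟧` an `A`-algebra via `x ↦ Y`, a diamond (not
definitional) with the constant embedding that Weierstrass division uses. -/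
attribute [-instance] PowerSeries.algebraPowerSeries MvPowerSeries.algebraMvPowerSeries

variable (k) in
def adjoinRootRingEquivArRing (r : ℕ) : AdjoinRoot (arPolynomial k r) ≃+* ArRing k r :=
  ((arPolynomial_isDistinguishedAt r).algEquivQuotient.toRingEquiv :
      AdjoinRoot (arPolynomial k r) ≃+* _).trans
    (Ideal.quotientEquiv _ _ (ps2EquivPowerSeries k).toRingEquiv
      (span_coe_arPolynomial_eq_map r)).symm

lemma adjoinRootRingEquivArRing_mk (r : ℕ) (p : (PowerSeries k)[X]) :
    adjoinRootRingEquivArRing k r (AdjoinRoot.mk _ p) =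
      Ideal.Quotient.mk _ ((ps2EquivPowerSeries k).symm p) :=
  rfl

variable (k) in
def adjoinRootEquivArRing (r : ℕ) : AdjoinRoot (arPolynomial k r) ≃ₐ[k] ArRing k r :=
  AlgEquiv.ofRingEquiv (f := adjoinRootRingEquivArRing k r) fun c => by
    rw [IsScalarTower.algebraMap_apply k (PowerSeries k), AdjoinRoot.algebraMap_eq, AdjoinRoot.of,
      RingHom.comp_apply, adjoinRootRingEquivArRing_mk, Polynomial.coe_C,
      ← PowerSeries.algebraMap_apply, AlgEquiv.commutes]
    rfl

lemma adjoinRootEquivArRing_mk (r : ℕ) (p : (PowerSeries k)[X]) :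
    adjoinRootEquivArRing k r (AdjoinRoot.mk _ p) =
      Ideal.Quotient.mk _ ((ps2EquivPowerSeries k).symm p) :=
  rfl

lemma adjoinRootEquivArRing_root (r : ℕ) :
    adjoinRootEquivArRing k r (AdjoinRoot.root _) = ArRing.y k r := by
  rw [AdjoinRoot.root, adjoinRootEquivArRing_mk, Polynomial.coe_X, ← ps2EquivPowerSeries_X_one,
    AlgEquiv.symm_apply_apply]
  rfl

lemma adjoinRootEquivArRing_of_X (r : ℕ) :
    adjoinRootEquivArRing k r (AdjoinRoot.of _ PowerSeries.X) = ArRing.x k r := by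
  rw [AdjoinRoot.of, RingHom.comp_apply, adjoinRootEquivArRing_mk, Polynomial.coe_C,
    ← ps2EquivPowerSeries_X_zero, AlgEquiv.symm_apply_apply]
  rfl

end Presentation

namespace ArRing

variable {k : Type*} [Field k] {r : ℕ}

variable (k r) in
def ofPowerSeries : PowerSeries k →ₐ[k] ArRing k r :=
  (adjoinRootEquivArRing k r).toAlgHom.comp
    (IsScalarTower.toAlgHom k (PowerSeries k) (AdjoinRoot (arPolynomial k r)))

lemma adjoinRootEquivArRing_of (a : PowerSeries k) :
    adjoinRootEquivArRing k r (AdjoinRoot.of _ a) = ofPowerSeries k r a :=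
  rfl

lemma ofPowerSeries_X : ofPowerSeries k r PowerSeries.X = x k r :=
  adjoinRootEquivArRing_of_X r

lemma adjoinRootEquivArRing_of_add_of_mul_root (a b : PowerSeries k) :
    adjoinRootEquivArRing k r (AdjoinRoot.of _ a + AdjoinRoot.of _ b * AdjoinRoot.root _) =
      ofPowerSeries k r a + ofPowerSeries k r b * y k r := by
  rw [map_add, map_mul, adjoinRootEquivArRing_root, adjoinRootEquivArRing_of,
    adjoinRootEquivArRing_of]

lemma exists_ofPowerSeries_add_mul_y (z : ArRing k r) :
    ∃ a b, ofPowerSeries k r a + ofPowerSeries k r b * y k r = z := by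
  obtain ⟨a, b, h⟩ := AdjoinRoot.exists_of_add_of_mul_root (arPolynomial_monic (k := k) r)
    (arPolynomial_natDegree r) ((adjoinRootEquivArRing k r).symm z)
  exact ⟨a, b, by rw [← adjoinRootEquivArRing_of_add_of_mul_root, h, AlgEquiv.apply_symm_apply]⟩

lemma eq_zero_of_ofPowerSeries_add_mul_y_eq_zero {a b : PowerSeries k}
    (h : ofPowerSeries k r a + ofPowerSeries k r b * y k r = 0) : a = 0 ∧ b = 0 := by
  rw [← adjoinRootEquivArRing_of_add_of_mul_root,
    map_eq_zero_iff _ (adjoinRootEquivArRing k r).injective] at h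
  exact AdjoinRoot.eq_zero_of_of_add_of_mul_root_eq_zero (arPolynomial_monic (k := k) r)
    (arPolynomial_natDegree (k := k) r) h

lemma ofPowerSeries_injective : Function.Injective (ofPowerSeries k r) := by
  refine (injective_iff_map_eq_zero _).2 fun a ha => ?_
  exact (eq_zero_of_ofPowerSeries_add_mul_y_eq_zero (r := r) (b := 0) (by simp [ha])).1

lemma y_mul_y : y k r * y k r = ofPowerSeries k r (PowerSeries.X ^ (r + 1)) := by
  have h : AdjoinRoot.mk (arPolynomial k r)
      (Polynomial.X ^ 2 - Polynomial.C (PowerSeries.X ^ (r + 1))) = 0 :=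
    AdjoinRoot.mk_self
  rw [map_sub, map_pow, AdjoinRoot.mk_X, AdjoinRoot.mk_C, sub_eq_zero] at h
  rw [← adjoinRootEquivArRing_of, ← h, ← adjoinRootEquivArRing_root, ← map_mul, ← pow_two]

lemma dvd_of_ofPowerSeries_add_mul_y_mem_span_x_pow {a b : PowerSeries k} {n : ℕ}
    (h : ofPowerSeries k r a + ofPowerSeries k r b * y k r ∈ Ideal.span {x k r ^ n}) :
    PowerSeries.X ^ n ∣ a ∧ PowerSeries.X ^ n ∣ b := by
  obtain ⟨u, hu⟩ := Ideal.mem_span_singleton'.1 h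
  obtain ⟨c, d, rfl⟩ := exists_ofPowerSeries_add_mul_y u
  have h0 := eq_zero_of_ofPowerSeries_add_mul_y_eq_zero (r := r)
    (a := a - PowerSeries.X ^ n * c) (b := b - PowerSeries.X ^ n * d) (by
      simp only [map_sub, map_mul, map_pow, ofPowerSeries_X]
      linear_combination -hu)
  exact ⟨⟨c, sub_eq_zero.1 h0.1⟩, ⟨d, sub_eq_zero.1 h0.2⟩⟩

lemma eq_zero_of_forall_mem_span_x_pow {w : ArRing k r} (h : ∀ n, w ∈ Ideal.span {x k r ^ n}) :
    w = 0 := by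
  obtain ⟨a, b, rfl⟩ := exists_ofPowerSeries_add_mul_y w
  have hdvd n := dvd_of_ofPowerSeries_add_mul_y_mem_span_x_pow (h n)
  rw [PowerSeries.eq_zero_of_forall_X_pow_dvd fun n => (hdvd n).1,
    PowerSeries.eq_zero_of_forall_X_pow_dvd fun n => (hdvd n).2, map_zero, zero_mul, add_zero]

lemma apply_ofPowerSeries {σ : ArRing k r →ₐ[k] ArRing k r} (hx : σ (x k r) = x k r)
    (a : PowerSeries k) : σ (ofPowerSeries k r a) = ofPowerSeries k r a := by
  have hcomp : σ.comp (ofPowerSeries k r) = ofPowerSeries k r :=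
    PowerSeries.algHom_ext_of_forall_mem_span_pow (by simp [ofPowerSeries_X, hx]) fun _ h =>
      eq_zero_of_forall_mem_span_x_pow (by simpa [ofPowerSeries_X, hx] using h)
  exact DFunLike.congr_fun hcomp a

lemma isUnit_two (h2 : (2 : k) ≠ 0) : IsUnit (2 : ArRing k r) := by
  rw [← map_ofNat (algebraMap k (ArRing k r)) 2]
  exact (IsUnit.mk0 _ h2).map _

section Involution

variable (σ : ArRing k r ≃ₐ[k] ArRing k r) (hx : σ (x k r) = x k r) (hy : σ (y k r) = - y k r)
include hx hy

lemma apply_ofPowerSeries_add_mul_y (a b : PowerSeries k) :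
    σ (ofPowerSeries k r a + ofPowerSeries k r b * y k r) =
      ofPowerSeries k r a - ofPowerSeries k r b * y k r := by
  have hσ : ∀ c, σ (ofPowerSeries k r c) = ofPowerSeries k r c :=
    apply_ofPowerSeries (σ := σ.toAlgHom) hx
  rw [map_add, map_mul, hσ, hσ, hy]
  ring

lemma equalizer_eq_range (h2 : (2 : k) ≠ 0) :
    AlgHom.equalizer (σ : ArRing k r →ₐ[k] ArRing k r)
      ((AlgEquiv.refl : ArRing k r ≃ₐ[k] ArRing k r) : ArRing k r →ₐ[k] ArRing k r) =
      (ofPowerSeries k r).range := by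
  ext z
  rw [AlgHom.mem_equalizer, AlgEquiv.coe_toAlgHom, AlgEquiv.coe_toAlgHom, AlgEquiv.coe_refl, id]
  constructor
  · intro hz
    obtain ⟨a, b, rfl⟩ := exists_ofPowerSeries_add_mul_y z
    rw [apply_ofPowerSeries_add_mul_y σ hx hy] at hz
    have hb : ofPowerSeries k r b * y k r = 0 :=
      (isUnit_two h2).mul_right_eq_zero.1 (by linear_combination -hz)
    rw [hb, add_zero]
    exact ⟨a, rfl⟩
  · rintro ⟨a, rfl⟩
    exact apply_ofPowerSeries (σ := σ.toAlgHom) hx a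

lemma span_range_sub_eq_span_y (h2 : (2 : k) ≠ 0) :
    Ideal.span (Set.range fun a => a - σ a) = Ideal.span {y k r} := by
  apply le_antisymm
  · rw [Ideal.span_le]
    rintro _ ⟨z, rfl⟩
    obtain ⟨a, b, rfl⟩ := exists_ofPowerSeries_add_mul_y z
    dsimp only
    rw [apply_ofPowerSeries_add_mul_y σ hx hy]
    exact Ideal.mem_span_singleton'.2 ⟨2 * ofPowerSeries k r b, by ring⟩
  · rw [Ideal.span_singleton_le_iff_mem]
    have hmem : y k r - σ (y k r) ∈ Ideal.span (Set.range fun a => a - σ a) :=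
      Ideal.subset_span ⟨y k r, rfl⟩
    rw [hy, sub_neg_eq_add, ← two_mul] at hmem
    have hy2 : y k r = ↑(isUnit_two (r := r) h2).unit⁻¹ * (2 * y k r) := by
      rw [← mul_assoc, IsUnit.val_inv_mul, one_mul]
    rw [hy2]
    exact Ideal.mul_mem_left _ _ hmem

end Involution

lemma y_mem_nonZeroDivisors : y k r ∈ nonZeroDivisors (ArRing k r) := by
  refine mem_nonZeroDivisors_iff_right.2 fun z hz => ?_
  obtain ⟨a, b, rfl⟩ := exists_ofPowerSeries_add_mul_y z
  have h0 := eq_zero_of_ofPowerSeries_add_mul_y_eq_zero (r := r)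
    (a := PowerSeries.X ^ (r + 1) * b) (b := a) (by
      rw [map_mul, ← y_mul_y]
      linear_combination hz)
  rw [h0.2, (mul_eq_zero.1 h0.1).resolve_left (pow_ne_zero _ PowerSeries.X_ne_zero)]
  simp

lemma free_range_ofPowerSeries : Module.Free (ofPowerSeries k r).range (ArRing k r) := by
  refine Module.Free.of_basis (Module.Basis.mk (v := ![1, y k r]) ?_ ?_)
  · rw [LinearIndependent.pair_iff]
    rintro ⟨_, a, rfl⟩ ⟨_, b, rfl⟩ h
    have h0 := eq_zero_of_ofPowerSeries_add_mul_y_eq_zero (r := r) (a := a) (b := b)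
      (by simpa [Subalgebra.smul_def] using h)
    exact ⟨Subtype.ext (by simp [h0.1]), Subtype.ext (by simp [h0.2])⟩
  · rintro z -
    obtain ⟨a, b, rfl⟩ := exists_ofPowerSeries_add_mul_y z
    rw [Matrix.range_cons_cons_empty, Submodule.mem_span_pair]
    exact ⟨⟨_, a, rfl⟩, ⟨_, b, rfl⟩, by simp [Subalgebra.smul_def]⟩

lemma faithfullyFlat_range_ofPowerSeries :
    Module.FaithfullyFlat (ofPowerSeries k r).range (ArRing k r) :=
  have := ofPowerSeries_injective (k := k) (r := r).nontrivial
  have := free_range_ofPowerSeries (k := k) (r := r)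
  inferInstance

lemma ofPowerSeries_mem_span_y_iff (a : PowerSeries k) :
    ofPowerSeries k r a ∈ Ideal.span {y k r} ↔ PowerSeries.X ^ (r + 1) ∣ a := by
  rw [Ideal.mem_span_singleton']
  constructor
  · rintro ⟨w, hw⟩
    obtain ⟨c, d, rfl⟩ := exists_ofPowerSeries_add_mul_y w
    have h0 := eq_zero_of_ofPowerSeries_add_mul_y_eq_zero (r := r)
      (a := PowerSeries.X ^ (r + 1) * d - a) (b := c) (by
        rw [map_sub, map_mul, ← y_mul_y]
        linear_combination hw)
    exact ⟨d, (sub_eq_zero.1 h0.1).symm⟩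
  · rintro ⟨d, rfl⟩
    exact ⟨y k r * ofPowerSeries k r d, by rw [map_mul, ← y_mul_y]; ring⟩

lemma finrank_quotient_span_y : Module.finrank k (ArRing k r ⧸ Ideal.span {y k r}) = r + 1 := by
  let φ := (Ideal.Quotient.mkₐ k (Ideal.span {y k r})).comp (ofPowerSeries k r)
  have hsurj : Function.Surjective φ := by
    intro q
    obtain ⟨z, rfl⟩ := Ideal.Quotient.mk_surjective q
    obtain ⟨a, b, rfl⟩ := exists_ofPowerSeries_add_mul_y z
    refine ⟨a, Ideal.Quotient.eq.2 (Ideal.mem_span_singleton'.2 ⟨-ofPowerSeries k r b, ?_⟩)⟩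
    simp only [AlgHom.coe_toRingHom]
    ring
  have hker : RingHom.ker φ = Ideal.span {PowerSeries.X ^ (r + 1)} := by
    ext a
    rw [RingHom.mem_ker, Ideal.mem_span_singleton, ← ofPowerSeries_mem_span_y_iff]
    exact Ideal.Quotient.eq_zero_iff_mem
  rw [← ((Ideal.quotientEquivAlgOfEq k hker.symm).trans
    (Ideal.quotientKerAlgEquivOfSurjective hsurj)).toLinearEquiv.finrank_eq,
    PowerSeries.finrank_quotient_span_X_pow]

end ArRing

set_option synthInstance.maxHeartbeats 1000000 in
theorem stmt4_general {k : Type*} [Field k] (h2 : (2 : k) ≠ 0) (r : ℕ)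
    (σ : ArRing k r ≃ₐ[k] ArRing k r)
    (hx : σ (ArRing.x k r) = ArRing.x k r) (hy : σ (ArRing.y k r) = - ArRing.y k r) :
    -- the invariant subalgebra `A_r^σ`
    letI S : Subalgebra k (ArRing k r) :=
      AlgHom.equalizer (σ : ArRing k r →ₐ[k] ArRing k r)
        ((AlgEquiv.refl : ArRing k r ≃ₐ[k] ArRing k r) : ArRing k r →ₐ[k] ArRing k r)
    -- the ideal of the fixed-point subscheme, generated by all `a - σ a`
    letI I : Ideal (ArRing k r) := Ideal.span (Set.range fun a => a - σ a)
    -- `A_r^σ ≅ k[[x]]`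
    Nonempty (S ≃ₐ[k] PowerSeries k) ∧
    -- the inclusion `A_r^σ ⊆ A_r` is faithfully flat
    Module.FaithfullyFlat S (ArRing k r) ∧
    -- the fixed ideal is `(y)` and is a Cartier divisor, of length `r+1`
    I = Ideal.span {ArRing.y k r} ∧
    ArRing.y k r ∈ nonZeroDivisors (ArRing k r) ∧
    Module.finrank k (ArRing k r ⧸ I) = r + 1 := by
  have hS := ArRing.equalizer_eq_range σ hx hy h2
  have hI := ArRing.span_range_sub_eq_span_y σ hx hy h2
  refine ⟨⟨(Subalgebra.equivOfEq _ _ hS).trans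
      (AlgEquiv.ofInjective _ (ArRing.ofPowerSeries_injective (k := k) (r := r))).symm⟩,
    hS ▸ ArRing.faithfullyFlat_range_ofPowerSeries, hI, ArRing.y_mem_nonZeroDivisors,
    hI ▸ ArRing.finrank_quotient_span_y⟩

set_option synthInstance.maxHeartbeats 1000000 in
theorem stmt4 {k : Type*} [Field k] (h2 : (2 : k) ≠ 0) (r : ℕ) (hr : Even r)
    (σ : ArRing k r ≃ₐ[k] ArRing k r) (hinv : ∀ a, σ (σ a) = a)
    (hx : σ (ArRing.x k r) = ArRing.x k r) (hy : σ (ArRing.y k r) = - ArRing.y k r) :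
    -- the invariant subalgebra `A_r^σ`
    letI S : Subalgebra k (ArRing k r) :=
      AlgHom.equalizer (σ : ArRing k r →ₐ[k] ArRing k r)
        ((AlgEquiv.refl : ArRing k r ≃ₐ[k] ArRing k r) : ArRing k r →ₐ[k] ArRing k r)
    -- the ideal of the fixed-point subscheme, generated by all `a - σ a`
    letI I : Ideal (ArRing k r) := Ideal.span (Set.range fun a => a - σ a)
    -- `A_r^σ ≅ k[[x]]`
    Nonempty (S ≃ₐ[k] PowerSeries k) ∧
    -- the inclusion `A_r^σ ⊆ A_r` is faithfully flat
    Module.FaithfullyFlat S (ArRing k r) ∧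
    -- the fixed ideal is `(y)` and is a Cartier divisor, of length `r+1`
    I = Ideal.span {ArRing.y k r} ∧
    ArRing.y k r ∈ nonZeroDivisors (ArRing k r) ∧
    Module.finrank k (ArRing k r ⧸ I) = r + 1 :=
  stmt4_general h2 r σ hx hy
end
end
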